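/- arXiv:1309.6125 — 3 statements merged into one kernel-verified Lean document; each statement's English description precedes it below -/
import Mathlib

section
/- Let μ be a finite positive Borel measure on [0,1) and let s>0. Then μ is an s-Carleson measure if and only if the sequence of moments μ_n = ∫_{[0,1)} t^n dμ(t) satisfies sup_{n≥0} (1+n)^s · μ_n < ∞. -/
open MeasureTheory Filter Topology

/-- The "p-th power mean" of `f` on the circle of radius `r`:
`(1/2π) ∫₀^{2π} ‖f(r e^{iθ})‖^p dθ`. -/
noncomputable def hpInt (p : ℝ) (f : ℂ → ℂ) (r : ℝ) : ℝ :=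
  (1 / (2 * Real.pi)) *
    ∫ θ in (0:ℝ)..(2 * Real.pi), ‖f ((r : ℂ) * Complex.exp ((θ : ℂ) * Complex.I))‖ ^ p

/-- The Hardy space norm `‖f‖_{H^p} = sup_{0 ≤ r < 1} M_p(r,f)`. -/
noncomputable def hpNorm (p : ℝ) (f : ℂ → ℂ) : ℝ :=
  ⨆ r : Set.Ico (0:ℝ) 1, hpInt p f (r : ℝ) ^ (1 / p)

/-- Membership in the Hardy space `H^p` of the unit disc. -/
def MemHp (p : ℝ) (f : ℂ → ℂ) : Prop :=
  DifferentiableOn ℂ f (Metric.ball 0 1) ∧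
    BddAbove (Set.range fun r : Set.Ico (0:ℝ) 1 => hpInt p f (r : ℝ) ^ (1 / p))

/-- `μ` (a measure on `[0,1)`) is an `s`-Carleson measure. -/
def IsCarleson (s : ℝ) (μ : Measure ℝ) : Prop :=
  ∃ C > 0, ∀ t ∈ Set.Ico (0:ℝ) 1, (μ (Set.Ico t 1)).toReal ≤ C * (1 - t) ^ s

/-- `μ` is a `1`-logarithmic `s`-Carleson measure. -/
def IsLogCarleson (s : ℝ) (μ : Measure ℝ) : Prop :=
  ∃ C > 0, ∀ t ∈ Set.Ico (0:ℝ) 1,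
    (μ (Set.Ico t 1)).toReal * Real.log (2 / (1 - t)) ≤ C * (1 - t) ^ s

/-- The `n`-th moment `μ_n = ∫_{[0,1)} t^n dμ(t)`. -/
noncomputable def moment (μ : Measure ℝ) (n : ℕ) : ℝ :=
  ∫ t in Set.Ico (0:ℝ) 1, t ^ n ∂μ

/-- The integral operator `I_μ(f)(z) = ∫_{[0,1)} f(t)/(1 - t z) dμ(t)`. -/
noncomputable def Imu (μ : Measure ℝ) (f : ℂ → ℂ) (z : ℂ) : ℂ :=
  ∫ t in Set.Ico (0:ℝ) 1, f (t : ℂ) / (1 - (t : ℂ) * z) ∂μ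

/-- `H_μ = I_μ` is a bounded operator from `H^p` into `H^q`. -/
def HmuBounded (μ : Measure ℝ) (p q : ℝ) : Prop :=
  ∃ C > 0, ∀ f : ℂ → ℂ, MemHp p f →
    MemHp q (Imu μ f) ∧ hpNorm q (Imu μ f) ≤ C * hpNorm p f

/-- `H_μ = I_μ` is a compact operator from `H^p` into `H^q`. -/
def HmuCompact (μ : Measure ℝ) (p q : ℝ) : Prop :=
  HmuBounded μ p q ∧
    ∀ f : ℕ → ℂ → ℂ, (∀ n, MemHp p (f n)) →
      (∃ M : ℝ, ∀ n, hpNorm p (f n) ≤ M) →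
      (∀ K : Set ℂ, K ⊆ Metric.ball 0 1 → IsCompact K →
        TendstoUniformlyOn (fun n => f n) (fun _ => (0:ℂ)) atTop K) →
      Tendsto (fun n => hpNorm q (Imu μ (f n))) atTop (𝓝 0)

/-- `∫_{[0,1-s)} dμ(t)/(1-t)`. -/
noncomputable def sweep (μ : Measure ℝ) (s : ℝ) : ENNReal :=
  ∫⁻ t in Set.Ico (0:ℝ) (1 - s), ENNReal.ofReal ((1 - t)⁻¹) ∂μ

/-- Condition (1.4): `∫₀¹ ( ∫_{[0,1-s)} dμ(t)/(1-t) )^e ds < ∞`. -/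
def IntCond (μ : Measure ℝ) (e : ℝ) : Prop :=
  ∫⁻ s in Set.Ioo (0:ℝ) 1, sweep μ s ^ e < ⊤

/-!
Markov's inequality `t ^ n μ[t, 1) ≤ μₙ`, taken at `n ≈ 1 / (2 (1 - t))` where Bernoulli gives
`t ^ n ≥ 1 / 2`, turns a bound `μₙ ≲ (1 + n) ^ (-s)` into the Carleson bound. Conversely, splitting
`[0, 1)` at `r = 1 - c / m` gives `μ₂ₘ ≤ e ^ (-c) μₘ + C (c / m) ^ s`; for `c = (s + 1) log 2` the
weighted moments `aₙ = (1 + n) ^ s μₙ` satisfy `aₙ ≤ a_{n/2} / 2 + D` for large `n`, and such a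
sequence is bounded.
-/

open Set Real

section Moments

variable (μ : Measure ℝ)

lemma setIntegral_Ico_zero_one_indicator_one {r : ℝ} (hr : 0 ≤ r) :
    ∫ t in Ico 0 1, (Ico r 1).indicator 1 t ∂μ = (μ (Ico r 1)).toReal := by
  rw [setIntegral_indicator measurableSet_Ico, Ico_inter_Ico, max_eq_right hr, min_self,
    Pi.one_def, setIntegral_const, smul_eq_mul, mul_one, measureReal_def]

lemma moment_nonneg (n : ℕ) : 0 ≤ moment μ n :=
  setIntegral_nonneg measurableSet_Ico fun _ ht => pow_nonneg ht.1 n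

variable [IsLocallyFiniteMeasure μ]

lemma integrableOn_pow_Ico_zero_one (k : ℕ) :
    IntegrableOn (fun t : ℝ => t ^ k) (Ico 0 1) μ :=
  ((continuous_pow k).continuousOn.integrableOn_compact isCompact_Icc).mono_set
    Ico_subset_Icc_self

lemma integrableOn_indicator_Ico_one (r : ℝ) :
    IntegrableOn ((Ico r 1).indicator (1 : ℝ → ℝ)) (Ico 0 1) μ :=
  (integrableOn_const measure_Ico_lt_top.ne).indicator measurableSet_Ico

lemma moment_antitone : Antitone (moment μ) := fun _ _ hkn =>
  setIntegral_mono_on (integrableOn_pow_Ico_zero_one μ _) (integrableOn_pow_Ico_zero_one μ _)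
    measurableSet_Ico fun _ ht => pow_le_pow_of_le_one ht.1 ht.2.le hkn

lemma pow_mul_measure_Ico_le_moment {t : ℝ} (ht : 0 ≤ t) (n : ℕ) :
    t ^ n * (μ (Ico t 1)).toReal ≤ moment μ n := by
  rw [← setIntegral_Ico_zero_one_indicator_one μ ht, ← integral_const_mul]
  refine setIntegral_mono_on ((integrableOn_indicator_Ico_one μ t).const_mul _)
    (integrableOn_pow_Ico_zero_one μ n) measurableSet_Ico fun x hx => ?_
  by_cases hxt : x ∈ Ico t 1
  · simpa [hxt] using pow_le_pow_left₀ ht hxt.1 n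
  · simpa [hxt] using pow_nonneg hx.1 n

lemma moment_two_mul_le {r : ℝ} (hr : 0 ≤ r) (m : ℕ) :
    moment μ (2 * m) ≤ r ^ m * moment μ m + (μ (Ico r 1)).toReal := by
  rw [← setIntegral_Ico_zero_one_indicator_one μ hr, moment, moment, ← integral_const_mul,
    ← integral_add ((integrableOn_pow_Ico_zero_one μ m).const_mul _)
      (integrableOn_indicator_Ico_one μ r)]
  refine setIntegral_mono_on (integrableOn_pow_Ico_zero_one μ _)
    (((integrableOn_pow_Ico_zero_one μ m).const_mul _).add (integrableOn_indicator_Ico_one μ r))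
    measurableSet_Ico fun x hx => ?_
  have hxm : 0 ≤ r ^ m * x ^ m := by positivity [hx.1]
  by_cases hxr : x ∈ Ico r 1
  · simpa [hxr] using le_add_of_nonneg_of_le hxm (pow_le_one₀ hx.1 hx.2.le)
  · have hxr : x < r := by simpa [hx.2] using hxr
    rw [two_mul, pow_add]
    simpa [hxr] using mul_le_mul_of_nonneg_right (pow_le_pow_left₀ hx.1 hxr.le m)
      (pow_nonneg hx.1 m)

end Moments

lemma exists_forall_le_of_le_half_add {a : ℕ → ℝ} {N : ℕ} {D : ℝ}
    (h : ∀ n ≥ N, a n ≤ a (n / 2) / 2 + D) : ∃ B, ∀ n, a n ≤ B := by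
  obtain ⟨B₀, hB₀⟩ := ((finite_Iio N).image a).bddAbove
  refine ⟨max B₀ (2 * D), fun n => ?_⟩
  induction n using Nat.strong_induction_on with
  | _ n ih =>
    have hD := le_max_right B₀ (2 * D)
    rcases lt_or_ge n N with hnN | hnN
    · exact le_max_of_le_left (hB₀ ⟨n, hnN, rfl⟩)
    rcases Nat.eq_zero_or_pos n with rfl | hn
    · linarith [h 0 hnN]
    · linarith [h n hnN, ih (n / 2) (Nat.div_lt_self hn one_lt_two)]

lemma isCarleson_of_forall_le {s C : ℝ} {μ : Measure ℝ}
    (h : ∀ t ∈ Ico (0 : ℝ) 1, (μ (Ico t 1)).toReal ≤ C * (1 - t) ^ s) : IsCarleson s μ :=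
  ⟨max C 1, by positivity, fun t ht => (h t ht).trans <|
    mul_le_mul_of_nonneg_right (le_max_left C 1) (rpow_nonneg (sub_nonneg.2 ht.2.le) s)⟩

section Carleson

variable {μ : Measure ℝ} {s C : ℝ}

lemma moment_le_of_rpow_mul_moment_le {B : ℝ} (hs : 0 ≤ s)
    (hB : ∀ n : ℕ, (1 + n : ℝ) ^ s * moment μ n ≤ B) {x : ℝ} (hx : 0 ≤ x) {n : ℕ}
    (hxn : 1 ≤ x * (1 + n)) : moment μ n ≤ B * x ^ s :=
  calc moment μ n ≤ (x * (1 + n)) ^ s * moment μ n :=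
        le_mul_of_one_le_left (moment_nonneg μ n) (one_le_rpow hxn hs)
    _ = x ^ s * ((1 + n) ^ s * moment μ n) := by
        rw [mul_rpow hx (by positivity)]
        ring
    _ ≤ B * x ^ s := by
        rw [mul_comm B]
        gcongr
        exact hB n

variable [IsLocallyFiniteMeasure μ]

lemma moment_two_mul_le_exp_neg_add
    (hCar : ∀ t ∈ Ico (0 : ℝ) 1, (μ (Ico t 1)).toReal ≤ C * (1 - t) ^ s)
    {c : ℝ} (hc : 0 < c) {m : ℕ} (hcm : c ≤ m) :
    moment μ (2 * m) ≤ exp (-c) * moment μ m + C * (c / m) ^ s := by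
  have hm : (0 : ℝ) < m := hc.trans_le hcm
  have hr0 : 0 ≤ 1 - c / m := sub_nonneg.2 ((div_le_one hm).2 hcm)
  have hr1 : 1 - c / m < 1 := sub_lt_self 1 (div_pos hc hm)
  calc moment μ (2 * m) ≤ (1 - c / m) ^ m * moment μ m + (μ (Ico (1 - c / m) 1)).toReal :=
        moment_two_mul_le μ hr0 m
    _ ≤ exp (-c) * moment μ m + C * (c / m) ^ s := by
        gcongr
        · exact moment_nonneg μ m
        · exact one_sub_div_pow_le_exp_neg hcm
        · simpa using hCar _ ⟨hr0, hr1⟩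

lemma two_rpow_mul_exp_neg (s : ℝ) : (2 : ℝ) ^ s * exp (-((s + 1) * log 2)) = 1 / 2 := by
  rw [rpow_def_of_pos two_pos, ← exp_add, show log 2 * s + -((s + 1) * log 2) = -log 2 by ring,
    exp_neg, exp_log two_pos, one_div]

lemma rpow_mul_moment_le_half_add (hs : 0 ≤ s) (hC : 0 ≤ C)
    (hCar : ∀ t ∈ Ico (0 : ℝ) 1, (μ (Ico t 1)).toReal ≤ C * (1 - t) ^ s)
    {n : ℕ} (hn : (s + 1) * log 2 ≤ (n / 2 : ℕ)) :
    (1 + n : ℝ) ^ s * moment μ n ≤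
      (1 + (n / 2 : ℕ) : ℝ) ^ s * moment μ (n / 2) / 2 + C * (4 * ((s + 1) * log 2)) ^ s := by
  set c := (s + 1) * log 2
  set m := n / 2
  have hc : 0 < c := by positivity
  have hm : (1 : ℝ) ≤ m := Nat.one_le_cast.2 (Nat.cast_pos.1 (hc.trans_le hn))
  have hnm : (1 + n : ℝ) ≤ 2 * (1 + m) := by
    have : (n : ℝ) ≤ 2 * m + 1 := by exact_mod_cast (by omega : n ≤ 2 * m + 1)
    linarith
  have hweight : (2 * (1 + m)) ^ s * (c / m) ^ s ≤ (4 * c) ^ s := by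
    rw [← mul_rpow (by positivity) (by positivity)]
    refine rpow_le_rpow (by positivity) ?_ hs
    have hcm : c / m ≤ c := div_le_self hc.le hm
    calc 2 * (1 + m) * (c / m) = 2 * (c / m) + 2 * c := by field_simp
      _ ≤ 4 * c := by linarith
  calc (1 + n : ℝ) ^ s * moment μ n ≤ (2 * (1 + m)) ^ s * moment μ (2 * m) := by
        gcongr
        · exact moment_nonneg μ n
        · exact moment_antitone μ (by omega)
    _ ≤ (2 * (1 + m)) ^ s * (exp (-c) * moment μ m + C * (c / m) ^ s) := by
        gcongr
        exact moment_two_mul_le_exp_neg_add hCar hc hn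
    _ = 2 ^ s * exp (-c) * ((1 + m) ^ s * moment μ m)
          + C * ((2 * (1 + m)) ^ s * (c / m) ^ s) := by
        rw [mul_rpow zero_le_two (by positivity)]
        ring
    _ ≤ (1 + m : ℝ) ^ s * moment μ m / 2 + C * (4 * c) ^ s := by
        rw [two_rpow_mul_exp_neg]
        linarith [mul_le_mul_of_nonneg_left hweight hC]

lemma exists_rpow_mul_moment_le_of_isCarleson (hs : 0 ≤ s) (h : IsCarleson s μ) :
    ∃ B, ∀ n : ℕ, (1 + n : ℝ) ^ s * moment μ n ≤ B := by
  obtain ⟨C, hC, hCar⟩ := h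
  exact exists_forall_le_of_le_half_add (N := 2 * ⌈(s + 1) * log 2⌉₊) fun n hn =>
    rpow_mul_moment_le_half_add hs hC.le hCar (Nat.ceil_le.1 (by omega))

lemma measure_Ico_le_two_mul_moment {t : ℝ} (ht : t ∈ Ico (0 : ℝ) 1) {n : ℕ}
    (hn : n * (1 - t) ≤ 1 / 2) : (μ (Ico t 1)).toReal ≤ 2 * moment μ n := by
  have hbernoulli : 1 / 2 ≤ t ^ n := by
    have := one_add_mul_le_pow (show (-2 : ℝ) ≤ t - 1 by linarith [ht.1]) n
    rw [add_sub_cancel] at this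
    linarith
  calc (μ (Ico t 1)).toReal ≤ 2 * (t ^ n * (μ (Ico t 1)).toReal) := by
        nlinarith [ENNReal.toReal_nonneg (a := μ (Ico t 1))]
    _ ≤ 2 * moment μ n := by
        gcongr
        exact pow_mul_measure_Ico_le_moment μ ht.1 n

lemma isCarleson_of_rpow_mul_moment_le {B : ℝ} (hs : 0 ≤ s)
    (hB : ∀ n : ℕ, (1 + n : ℝ) ^ s * moment μ n ≤ B) : IsCarleson s μ := by
  refine isCarleson_of_forall_le (C := 2 * B * 2 ^ s) fun t ht => ?_
  have h1t : 0 < 1 - t := sub_pos.2 ht.2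
  set n := ⌊(2 * (1 - t))⁻¹⌋₊
  have hn : n * (1 - t) ≤ 1 / 2 := by
    calc n * (1 - t) ≤ (2 * (1 - t))⁻¹ * (1 - t) :=
          mul_le_mul_of_nonneg_right (Nat.floor_le (by positivity)) h1t.le
      _ = 1 / 2 := by field_simp
  have hn' : 1 ≤ 2 * (1 - t) * (1 + n) := by
    have := Nat.lt_floor_add_one (2 * (1 - t))⁻¹
    rw [inv_lt_iff_one_lt_mul₀ (by positivity), add_comm] at this
    linarith
  calc (μ (Ico t 1)).toReal ≤ 2 * moment μ n := measure_Ico_le_two_mul_moment ht hn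
    _ ≤ 2 * (B * (2 * (1 - t)) ^ s) := by
        gcongr
        exact moment_le_of_rpow_mul_moment_le hs hB (by positivity) hn'
    _ = 2 * B * 2 ^ s * (1 - t) ^ s := by
        rw [mul_rpow zero_le_two h1t.le]
        ring

end Carleson

theorem carleson_iff_moments_general (μ : Measure ℝ) [IsFiniteMeasure μ]
    (s : ℝ) (hs : 0 < s) :
    IsCarleson s μ ↔ ∃ C : ℝ, ∀ n : ℕ, ((1 : ℝ) + n) ^ s * moment μ n ≤ C :=
  ⟨exists_rpow_mul_moment_le_of_isCarleson hs.le,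
    fun ⟨_, hB⟩ => isCarleson_of_rpow_mul_moment_le hs.le hB⟩

/-- `μ` is an `s`-Carleson measure iff `sup_n (1+n)^s μ_n < ∞`. -/
theorem carleson_iff_moments (μ : Measure ℝ) [IsFiniteMeasure μ]
    (hsupp : μ ((Set.Ico (0:ℝ) 1)ᶜ) = 0) (s : ℝ) (hs : 0 < s) :
    IsCarleson s μ ↔ ∃ C : ℝ, ∀ n : ℕ, ((1 : ℝ) + n) ^ s * moment μ n ≤ C :=
  carleson_iff_moments_general μ s hs
end

section
/- Suppose 0<p≤1 and let μ be a finite positive Borel measure on [0,1). If for every f∈H^p and every z in the unit disc D the integral ∫_{[0,1)} |f(t)|/|1−tz| dμ(t) is finite (so that I_μ(f) is a well-defined analytic function on D for every f∈H^p), then μ is a (1/p)-Carleson measure. -/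
open MeasureTheory Filter Topology

/-!
Suppose `μ` is not a `1/p`-Carleson measure and fix `N` with `N p ≥ 2`. Then there are
`T n ∈ [0, 1)` with `μ [T n, 1) > 2^(N+n) (n+1) (1 - T n)^(1/p)`. The function
`g_T z = (1 - T)^(N - 1/p) / (1 - T z)^N` has all its circle means
`(1/2π) ∫ |g_T (r e^{iθ})|^p dθ` at most `1`: on the unit circle `|1 - s z|^(-Np)` is at most
`(1 - s)^(1 - Np)` times the Poisson kernel at `s`, whose mean is `1`. Since `p ≤ 1`, the `p`-th
power of a sum is at most the sum of the `p`-th powers, so `f = ∑ 2^(-n) g_(T n)` lies in `H^p`.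
On the other hand `f ≥ 2^(-n-N) (1 - T n)^(-1/p)` on `[T n, 1)`, so `∫ |f| dμ ≥ n + 1` for
every `n`, contradicting the integrability of `f` against `μ` on `[0, 1)`, i.e. `I_μ(f)(0)`.
-/

open Complex Metric Real Set
open scoped ENNReal

theorem ENNReal.rpow_tsum_le_tsum_rpow {ι : Type*} {p : ℝ} (hp0 : 0 < p) (hp1 : p ≤ 1)
    (u : ι → ℝ≥0∞) : (∑' i, u i) ^ p ≤ ∑' i, u i ^ p := by
  rw [← ENNReal.le_rpow_inv_iff hp0, ENNReal.tsum_eq_iSup_sum]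
  refine iSup_le fun s => (ENNReal.le_rpow_inv_iff hp0).2 ?_
  calc (∑ i ∈ s, u i) ^ p ≤ ∑ i ∈ s, u i ^ p :=
        Finset.le_sum_of_subadditive (· ^ p) (by simp [hp0])
          (fun a b => ENNReal.rpow_add_le_add_rpow a b hp0.le hp1) s u
    _ ≤ ∑' i, u i ^ p := ENNReal.sum_le_tsum s

theorem ofReal_norm_rpow {E : Type*} [NormedAddCommGroup E] {p : ℝ} (hp : 0 ≤ p) (x : E) :
    ENNReal.ofReal (‖x‖ ^ p) = ‖x‖ₑ ^ p := by
  rw [← ENNReal.ofReal_rpow_of_nonneg (norm_nonneg x) hp, ofReal_norm]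

theorem circleAverage_rpow_norm_tsum_le {ι E : Type*} [Countable ι] [NormedAddCommGroup E]
    {p : ℝ} (hp0 : 0 < p) (hp1 : p ≤ 1) {g : ι → ℂ → E} {c : ℂ} {R : ℝ}
    (hg : ∀ i, ContinuousOn (g i) (sphere c |R|))
    (hs : Summable fun i => circleAverage (fun z => ‖g i z‖ ^ p) c R) :
    circleAverage (fun z => ‖∑' i, g i z‖ ^ p) c R
      ≤ ∑' i, circleAverage (fun z => ‖g i z‖ ^ p) c R := by
  have hcont (i : ι) : Continuous fun θ => g i (circleMap c R θ) :=
    (hg i).comp_continuous (continuous_circleMap c R) (circleMap_mem_sphere' c R)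
  set A : ι → ℝ := fun i => ∫ θ in (0)..2 * π, ‖g i (circleMap c R θ)‖ ^ p
  have hA0 (i : ι) : 0 ≤ A i :=
    intervalIntegral.integral_nonneg two_pi_pos.le fun _ _ => by positivity
  have hA (i : ι) :
      ENNReal.ofReal (A i) = ∫⁻ θ in Ioc 0 (2 * π), ‖g i (circleMap c R θ)‖ₑ ^ p := by
    rw [show A i = _ from intervalIntegral.integral_of_le two_pi_pos.le,
      ofReal_integral_eq_lintegral_ofReal
        (((hcont i).norm.rpow_const fun _ => Or.inr hp0.le).integrableOn_Ioc)
        (Eventually.of_forall fun _ => by positivity)]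
    simp_rw [ofReal_norm_rpow hp0.le]
  have hAs : Summable A := by
    refine (hs.mul_left (2 * π)).congr fun i => ?_
    simp only [circleAverage_def, smul_eq_mul, A]
    field_simp
  suffices h : ∫ θ in (0)..2 * π, ‖∑' i, g i (circleMap c R θ)‖ ^ p ≤ ∑' i, A i by
    simp only [circleAverage_def, smul_eq_mul, tsum_mul_left]
    exact mul_le_mul_of_nonneg_left h (by positivity)
  rw [← ENNReal.ofReal_le_ofReal_iff (tsum_nonneg hA0), ENNReal.ofReal_tsum_of_nonneg hA0 hAs,
    intervalIntegral.integral_of_le two_pi_pos.le]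
  calc ENNReal.ofReal (∫ θ in Ioc 0 (2 * π), ‖∑' i, g i (circleMap c R θ)‖ ^ p)
      ≤ ∫⁻ θ in Ioc 0 (2 * π), ‖∑' i, g i (circleMap c R θ)‖ₑ ^ p := by
        refine (ENNReal.ofReal_le_ofReal (le_abs_self _)).trans ?_
        rw [← Real.enorm_eq_ofReal_abs]
        refine (enorm_integral_le_lintegral_enorm _).trans_eq (lintegral_congr fun θ => ?_)
        rw [Real.enorm_of_nonneg (by positivity), ofReal_norm_rpow hp0.le]
    _ ≤ ∫⁻ θ in Ioc 0 (2 * π), ∑' i, ‖g i (circleMap c R θ)‖ₑ ^ p :=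
        lintegral_mono fun θ => (ENNReal.rpow_le_rpow enorm_tsum_le_tsum_enorm hp0.le).trans
          (ENNReal.rpow_tsum_le_tsum_rpow hp0 hp1 _)
    _ = ∑' i, ENNReal.ofReal (A i) := by
        rw [lintegral_tsum fun i => ((hcont i).enorm.measurable.pow_const p).aemeasurable]
        simp_rw [hA]

theorem circleAverage_const_mul (a : ℝ) (f : ℂ → ℝ) (c : ℂ) (R : ℝ) :
    circleAverage (fun z => a * f z) c R = a * circleAverage f c R :=
  circleAverage_fun_smul (a := a) (f := f)

theorem one_sub_mul_norm_le_norm_one_sub_mul {T : ℝ} (hT : 0 ≤ T) (z : ℂ) :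
    1 - T * ‖z‖ ≤ ‖1 - T * z‖ := by
  calc 1 - T * ‖z‖ = ‖(1 : ℂ)‖ - ‖(T : ℂ) * z‖ := by simp [abs_of_nonneg hT]
    _ ≤ _ := norm_sub_norm_le _ _

theorem norm_one_sub_ofReal_mul_eq_norm_sub (s : ℝ) {z : ℂ} (hz : ‖z‖ = 1) :
    ‖1 - s * z‖ = ‖z - s‖ := by
  have h : (starRingEnd ℂ) z * (1 - s * z) = (starRingEnd ℂ) (z - s) := by
    rw [mul_sub, mul_one, mul_left_comm, Complex.conj_mul', hz]
    simp
  rw [← Complex.norm_conj (z - s), ← h, norm_mul, Complex.norm_conj, hz, one_mul]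

theorem circleAverage_poissonKernel_zero_one {s : ℝ} (hs0 : 0 ≤ s) (hs1 : s < 1) :
    circleAverage (poissonKernel 0 s) 0 1 = 1 := by
  have := (InnerProductSpace.harmonicOnNhd_const (1 : ℝ)).circleAverage_poissonKernel_smul
    (c := 0) (R := 1) (w := s) (by simp [abs_of_nonneg hs0, hs1])
  rwa [show poissonKernel 0 (s : ℂ) • (fun _ => (1 : ℝ)) = poissonKernel 0 s from
    funext fun z => mul_one _] at this

theorem inv_norm_one_sub_mul_rpow_le_mul_poissonKernel {s a : ℝ} (hs0 : 0 ≤ s) (hs1 : s < 1)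
    (ha : 2 ≤ a) {z : ℂ} (hz : ‖z‖ = 1) :
    (‖1 - s * z‖ ^ a)⁻¹ ≤ (1 - s) ^ (1 - a) * poissonKernel 0 s z := by
  have hs : 0 < 1 - s := by linarith
  set m := ‖1 - s * z‖
  have hm : 1 - s ≤ m := by simpa [hz] using one_sub_mul_norm_le_norm_one_sub_mul hs0 z
  have hm0 : 0 < m := hs.trans_le hm
  have hP : poissonKernel 0 s z = (1 - s ^ 2) / m ^ 2 := by
    simp [poissonKernel, m, norm_one_sub_ofReal_mul_eq_norm_sub s hz, hz, sq_abs]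
  have hma : m ^ 2 * (1 - s) ^ (a - 2) ≤ m ^ a := by
    calc m ^ 2 * (1 - s) ^ (a - 2) ≤ m ^ 2 * m ^ (a - 2) := by gcongr
      _ = m ^ a := by rw [← Real.rpow_natCast, ← Real.rpow_add hm0]; norm_num
  calc (m ^ a)⁻¹ ≤ (m ^ 2 * (1 - s) ^ (a - 2))⁻¹ := inv_anti₀ (by positivity) hma
    _ = (1 - s) ^ (1 - a) * ((1 - s) / m ^ 2) := by
      rw [show 1 - a = -(a - 2) + -1 by ring, Real.rpow_add hs, Real.rpow_neg hs.le,
        Real.rpow_neg_one]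
      field_simp
    _ ≤ (1 - s) ^ (1 - a) * poissonKernel 0 s z := by rw [hP]; gcongr; nlinarith

theorem circleAverage_inv_norm_one_sub_mul_rpow_le {s a : ℝ} (hs0 : 0 ≤ s) (hs1 : s < 1)
    (ha : 2 ≤ a) :
    circleAverage (fun z => (‖1 - s * z‖ ^ a)⁻¹) 0 1 ≤ (1 - s) ^ (1 - a) := by
  have hpos : ∀ z ∈ sphere (0 : ℂ) |1|, 0 < ‖1 - s * z‖ := fun z hz => by
    have := one_sub_mul_norm_le_norm_one_sub_mul hs0 z
    simp only [abs_one, mem_sphere_zero_iff_norm] at hz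
    rw [hz] at this
    linarith
  have hw : (s : ℂ) ∈ ball 0 1 := by simp [abs_of_nonneg hs0, hs1]
  calc circleAverage (fun z => (‖1 - s * z‖ ^ a)⁻¹) 0 1
      ≤ circleAverage (fun z => (1 - s) ^ (1 - a) * poissonKernel 0 s z) 0 1 := by
        refine circleAverage_mono (ContinuousOn.circleIntegrable' ?_)
          (ContinuousOn.circleIntegrable' ?_) fun z hz =>
            inv_norm_one_sub_mul_rpow_le_mul_poissonKernel hs0 hs1 ha (by simpa using hz)
        · exact (ContinuousOn.rpow_const (by fun_prop) fun z hz => Or.inl (hpos z hz).ne').inv₀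
            fun z hz => (Real.rpow_pos_of_pos (hpos z hz) a).ne'
        · rw [poissonKernel_eq_re_herglotzRieszKernel]
          exact continuousOn_const.mul
            (continuous_re.comp_continuousOn (continuousOn_herglotzRieszKernel_sphere hw))
    _ = (1 - s) ^ (1 - a) := by
        rw [circleAverage_const_mul, circleAverage_poissonKernel_zero_one hs0 hs1, mul_one]

theorem hpInt_eq_circleAverage (p : ℝ) (f : ℂ → ℂ) (r : ℝ) :
    hpInt p f r = circleAverage (fun z => ‖f z‖ ^ p) 0 r := by
  simp [hpInt, circleAverage_def, circleMap_zero]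

theorem memHp_of_hpInt_le {p B : ℝ} {f : ℂ → ℂ} (hf : DifferentiableOn ℂ f (ball 0 1))
    (hp : 0 ≤ p) (hB : ∀ r ∈ Ico (0 : ℝ) 1, hpInt p f r ≤ B) : MemHp p f := by
  refine ⟨hf, B ^ (1 / p), ?_⟩
  rintro _ ⟨⟨r, hr⟩, rfl⟩
  have h0 : 0 ≤ hpInt p f r := by
    rw [hpInt_eq_circleAverage]
    exact circleAverage_nonneg_of_nonneg fun z _ => by positivity
  exact Real.rpow_le_rpow h0 (hB r hr) (by positivity)

noncomputable def testFn (p : ℝ) (N : ℕ) (T : ℝ) (z : ℂ) : ℂ :=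
  ((1 - T) ^ ((N : ℝ) - 1 / p) : ℝ) / (1 - T * z) ^ N

section testFn

variable {p T : ℝ} {N : ℕ}

theorem one_sub_norm_le_norm_one_sub_mul (hT0 : 0 ≤ T) (hT1 : T ≤ 1) (z : ℂ) :
    1 - ‖z‖ ≤ ‖1 - T * z‖ :=
  (by nlinarith [norm_nonneg z] : 1 - ‖z‖ ≤ 1 - T * ‖z‖).trans
    (one_sub_mul_norm_le_norm_one_sub_mul hT0 z)

theorem differentiableOn_testFn (hT0 : 0 ≤ T) (hT1 : T ≤ 1) :
    DifferentiableOn ℂ (testFn p N T) (ball 0 1) := by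
  refine (differentiableOn_const _).div (by fun_prop) fun z hz => pow_ne_zero _ ?_
  rw [mem_ball_zero_iff] at hz
  exact norm_pos_iff.1 ((sub_pos.2 hz).trans_le (one_sub_norm_le_norm_one_sub_mul hT0 hT1 z))

theorem norm_testFn_le (hT0 : 0 ≤ T) (hT1 : T < 1) (hN : 1 / p ≤ N) {z : ℂ}
    (hz : ‖z‖ < 1) :
    ‖testFn p N T z‖ ≤ ((1 - ‖z‖) ^ N)⁻¹ := by
  have hden := one_sub_norm_le_norm_one_sub_mul hT0 hT1.le z
  have hnum : (1 - T) ^ ((N : ℝ) - 1 / p) ≤ 1 :=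
    Real.rpow_le_one (by linarith) (by linarith) (by linarith)
  rw [testFn, norm_div, norm_pow, Complex.norm_real, Real.norm_of_nonneg (by positivity),
    div_eq_mul_inv]
  calc _ ≤ 1 * (‖1 - T * z‖ ^ N)⁻¹ := by gcongr
    _ ≤ ((1 - ‖z‖) ^ N)⁻¹ := by
      rw [one_mul]
      exact inv_anti₀ (pow_pos (by linarith) N) (pow_le_pow_left₀ (by linarith) hden N)

theorem rpow_norm_testFn_mul (hp : p ≠ 0) (hT1 : T ≤ 1) (r : ℝ) (z : ℂ) :
    ‖testFn p N T (r * z)‖ ^ p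
      = (1 - T) ^ (N * p - 1) * (‖1 - (T * r : ℝ) * z‖ ^ (N * p))⁻¹ := by
  have hT : 0 ≤ 1 - T := by linarith
  rw [testFn, norm_div, norm_pow, Complex.norm_real, Real.norm_of_nonneg (by positivity),
    Real.div_rpow (by positivity) (by positivity), ← Real.rpow_mul hT, ← Real.rpow_natCast,
    ← Real.rpow_mul (norm_nonneg _), div_eq_mul_inv]
  push_cast
  congr 2
  · field_simp
  · rw [mul_assoc]

theorem hpInt_testFn_le_one (hp0 : 0 < p) (hN : 2 ≤ N * p) (hT0 : 0 ≤ T) (hT1 : T < 1)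
    {r : ℝ} (hr0 : 0 ≤ r) (hr1 : r < 1) : hpInt p (testFn p N T) r ≤ 1 := by
  have hTr : 1 - T ≤ 1 - T * r := by nlinarith
  have hTr0 : 0 ≤ T * r := by positivity
  have hTr1 : T * r < 1 := by nlinarith
  rw [hpInt_eq_circleAverage, circleAverage_eq_circleAverage_zero_one]
  calc circleAverage (fun z => ‖testFn p N T (r * z + 0)‖ ^ p) 0 1
      = (1 - T) ^ (N * p - 1) * circleAverage
          (fun z : ℂ => (‖1 - (T * r : ℝ) * z‖ ^ (N * p))⁻¹) 0 1 := by
        simp_rw [add_zero, rpow_norm_testFn_mul hp0.ne' hT1.le, circleAverage_const_mul]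
    _ ≤ (1 - T) ^ (N * p - 1) * (1 - T * r) ^ (1 - N * p) := by
        gcongr
        exact circleAverage_inv_norm_one_sub_mul_rpow_le hTr0 hTr1 hN
    _ ≤ 1 := by
        rw [show 1 - (N : ℝ) * p = -(N * p - 1) by ring, Real.rpow_neg (by linarith)]
        exact mul_inv_le_one_of_le₀ (Real.rpow_le_rpow (by linarith) hTr (by linarith))
          (by positivity)

theorem testFn_ofReal (t : ℝ) :
    testFn p N T t = (((1 - T) ^ ((N : ℝ) - 1 / p) / (1 - T * t) ^ N : ℝ) : ℂ) := by
  simp [testFn]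

theorem inv_two_pow_mul_rpow_le_norm_testFn (hT0 : 0 ≤ T) (hT1 : T < 1) {t : ℝ} (hTt : T ≤ t)
    (ht1 : t < 1) : (2 ^ N * (1 - T) ^ (1 / p))⁻¹ ≤ ‖testFn p N T t‖ := by
  have hT : 0 < 1 - T := by linarith
  have hTt0 : 0 < 1 - T * t := by nlinarith
  rw [testFn_ofReal, Complex.norm_real, Real.norm_of_nonneg (by positivity)]
  calc (2 ^ N * (1 - T) ^ (1 / p))⁻¹ = (1 - T) ^ ((N : ℝ) - 1 / p) / (2 * (1 - T)) ^ N := by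
        rw [Real.rpow_sub hT, Real.rpow_natCast, mul_pow]
        field_simp
    _ ≤ (1 - T) ^ ((N : ℝ) - 1 / p) / (1 - T * t) ^ N := by
        gcongr
        nlinarith

end testFn

noncomputable def testSeries (p : ℝ) (N : ℕ) (c T : ℕ → ℝ) (z : ℂ) : ℂ :=
  ∑' n, c n * testFn p N (T n) z

section testSeries

variable {p : ℝ} {N : ℕ} {c T : ℕ → ℝ}

theorem differentiableOn_testSeries (hT : ∀ n, T n ∈ Ico 0 1) (hN : 1 / p ≤ N)
    (hc0 : ∀ n, 0 ≤ c n) (hc : Summable c) :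
    DifferentiableOn ℂ (testSeries p N c T) (ball 0 1) := by
  intro z hz
  rw [mem_ball_zero_iff] at hz
  obtain ⟨ρ, hzρ, hρ1⟩ := exists_between hz
  have hbound (n : ℕ) (w : ℂ) (hw : w ∈ ball (0 : ℂ) ρ) :
      ‖(c n : ℂ) * testFn p N (T n) w‖ ≤ c n * ((1 - ρ) ^ N)⁻¹ := by
    rw [mem_ball_zero_iff] at hw
    rw [norm_mul, Complex.norm_real, Real.norm_of_nonneg (hc0 n)]
    exact mul_le_mul_of_nonneg_left
      ((norm_testFn_le (hT n).1 (hT n).2 hN (hw.trans hρ1)).trans (by gcongr)) (hc0 n)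
  have hdiff : DifferentiableOn ℂ (testSeries p N c T) (ball 0 ρ) :=
    Complex.differentiableOn_tsum_of_summable_norm (hc.mul_right _)
      (fun n => ((differentiableOn_testFn (hT n).1 (hT n).2.le).mono
        (ball_subset_ball hρ1.le)).const_mul _) isOpen_ball hbound
  exact (hdiff.differentiableAt
    (isOpen_ball.mem_nhds (mem_ball_zero_iff.2 hzρ))).differentiableWithinAt

theorem hpInt_testSeries_le (hp0 : 0 < p) (hp1 : p ≤ 1) (hN : 2 ≤ N * p)
    (hT : ∀ n, T n ∈ Ico 0 1) (hc0 : ∀ n, 0 ≤ c n) (hcp : Summable fun n => c n ^ p)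
    {r : ℝ} (hr0 : 0 ≤ r) (hr1 : r < 1) :
    hpInt p (testSeries p N c T) r ≤ ∑' n, c n ^ p := by
  have hterm (n : ℕ) :
      circleAverage (fun z => ‖(c n : ℂ) * testFn p N (T n) z‖ ^ p) 0 r ≤ c n ^ p := by
    simp_rw [norm_mul, Complex.norm_real, Real.norm_of_nonneg (hc0 n),
      Real.mul_rpow (hc0 n) (norm_nonneg _)]
    rw [circleAverage_const_mul, ← hpInt_eq_circleAverage]
    exact mul_le_of_le_one_right (Real.rpow_nonneg (hc0 n) p)
      (hpInt_testFn_le_one hp0 hN (hT n).1 (hT n).2 hr0 hr1)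
  have hterm0 (n : ℕ) :
      0 ≤ circleAverage (fun z => ‖(c n : ℂ) * testFn p N (T n) z‖ ^ p) 0 r :=
    circleAverage_nonneg_of_nonneg fun z _ => by positivity
  have hcont (n : ℕ) :
      ContinuousOn (fun z => (c n : ℂ) * testFn p N (T n) z) (sphere 0 |r|) :=
    continuousOn_const.mul ((differentiableOn_testFn (hT n).1 (hT n).2.le).continuousOn.mono
      (sphere_subset_ball (by rwa [abs_of_nonneg hr0])))
  have hs := Summable.of_nonneg_of_le hterm0 hterm hcp
  rw [hpInt_eq_circleAverage]
  exact (circleAverage_rpow_norm_tsum_le hp0 hp1 hcont hs).trans (hs.tsum_le_tsum hterm hcp)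

theorem memHp_testSeries (hp0 : 0 < p) (hp1 : p ≤ 1) (hN : 2 ≤ N * p)
    (hT : ∀ n, T n ∈ Ico 0 1) (hc0 : ∀ n, 0 ≤ c n) (hc : Summable c)
    (hcp : Summable fun n => c n ^ p) : MemHp p (testSeries p N c T) := by
  have hN' : 1 / p ≤ N := by
    rw [div_le_iff₀ hp0]
    linarith
  exact memHp_of_hpInt_le (differentiableOn_testSeries hT hN' hc0 hc) hp0.le
    fun r hr => hpInt_testSeries_le hp0 hp1 hN hT hc0 hcp hr.1 hr.2

theorem le_norm_testSeries_ofReal (hT : ∀ n, T n ∈ Ico 0 1) (hN : 1 / p ≤ N)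
    (hc0 : ∀ n, 0 ≤ c n) (hc : Summable c) (n : ℕ) {t : ℝ} (ht : t ∈ Ico (T n) 1) :
    c n * (2 ^ N * (1 - T n) ^ (1 / p))⁻¹ ≤ ‖testSeries p N c T t‖ := by
  have ht0 : 0 ≤ t := (hT n).1.trans ht.1
  set a : ℕ → ℝ := fun k => c k * ((1 - T k) ^ ((N : ℝ) - 1 / p) / (1 - T k * t) ^ N)
  have hterm (k : ℕ) : (c k : ℂ) * testFn p N (T k) t = (a k : ℂ) := by
    rw [testFn_ofReal, ← Complex.ofReal_mul]
  have ha0 (k : ℕ) : 0 ≤ a k := by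
    have := hc0 k
    have : 0 < 1 - T k * t := by
      linarith [mul_le_of_le_one_right (hT k).1 ht.2.le, (hT k).2]
    have := (hT k).2
    positivity
  have hnorm (k : ℕ) : a k = c k * ‖testFn p N (T k) t‖ := by
    rw [← Real.norm_of_nonneg (ha0 k), ← Complex.norm_real, ← hterm, norm_mul,
      Complex.norm_real, Real.norm_of_nonneg (hc0 k)]
  have ha : Summable a := by
    refine Summable.of_nonneg_of_le ha0 (fun k => ?_) (hc.mul_right ((1 - t) ^ N)⁻¹)
    rw [hnorm]
    refine mul_le_mul_of_nonneg_left ?_ (hc0 k)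
    simpa [abs_of_nonneg ht0] using
      norm_testFn_le (hT k).1 (hT k).2 hN (z := t) (by simpa [abs_of_nonneg ht0] using ht.2)
  calc c n * (2 ^ N * (1 - T n) ^ (1 / p))⁻¹ ≤ a n := by
        rw [hnorm]
        exact mul_le_mul_of_nonneg_left
          (inv_two_pow_mul_rpow_le_norm_testFn (hT n).1 (hT n).2 ht.1 ht.2) (hc0 n)
    _ ≤ ∑' k, a k := ha.le_tsum n fun k _ => ha0 k
    _ = ‖testSeries p N c T t‖ := by
        rw [testSeries]
        simp_rw [hterm]
        rw [← Complex.ofReal_tsum, Complex.norm_real, Real.norm_of_nonneg (tsum_nonneg ha0)]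

theorem ofReal_le_lintegral_norm_testSeries {μ : Measure ℝ} (hT : ∀ n, T n ∈ Ico 0 1)
    (hN : 1 / p ≤ N) (hc0 : ∀ n, 0 ≤ c n) (hc : Summable c) (n : ℕ) {K : ℝ}
    (hμ : K * (1 - T n) ^ (1 / p) ≤ (μ (Ico (T n) 1)).toReal) :
    ENNReal.ofReal (c n * K / 2 ^ N)
      ≤ ∫⁻ t in Ico 0 1, ‖testSeries p N c T t‖ₑ ∂μ := by
  set b := c n * (2 ^ N * (1 - T n) ^ (1 / p))⁻¹
  have hx : 0 < (1 - T n) ^ (1 / p) := Real.rpow_pos_of_pos (by linarith [(hT n).2]) _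
  calc ENNReal.ofReal (c n * K / 2 ^ N)
      = ENNReal.ofReal b * ENNReal.ofReal (K * (1 - T n) ^ (1 / p)) := by
        rw [← ENNReal.ofReal_mul (by have := hc0 n; positivity)]
        congr 1
        simp only [b]
        field_simp
    _ ≤ ∫⁻ _ in Ico (T n) 1, ENNReal.ofReal b ∂μ := by
        rw [setLIntegral_const]
        gcongr
        exact (ENNReal.ofReal_le_ofReal hμ).trans ENNReal.ofReal_toReal_le
    _ ≤ ∫⁻ t in Ico (T n) 1, ‖testSeries p N c T t‖ₑ ∂μ :=
        setLIntegral_mono' measurableSet_Ico fun t ht => by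
          rw [← ofReal_norm]
          exact ENNReal.ofReal_le_ofReal (le_norm_testSeries_ofReal hT hN hc0 hc n ht)
    _ ≤ ∫⁻ t in Ico 0 1, ‖testSeries p N c T t‖ₑ ∂μ :=
        lintegral_mono_set (Ico_subset_Ico_left (hT n).1)

end testSeries

theorem carleson_of_Imu_welldefined_general (p : ℝ) (hp0 : 0 < p) (hp1 : p ≤ 1)
    (μ : Measure ℝ)
    (h : ∀ f : ℂ → ℂ, MemHp p f → ∀ z ∈ Metric.ball (0:ℂ) 1,
      IntegrableOn (fun t : ℝ => f (t : ℂ) / (1 - (t : ℂ) * z)) (Set.Ico (0:ℝ) 1) μ) :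
    IsCarleson (1/p) μ := by
  by_contra hC
  simp only [IsCarleson, not_exists, not_and, not_forall, not_le] at hC
  obtain ⟨N, hN⟩ : ∃ N : ℕ, 2 ≤ N * p :=
    ⟨⌈2 / p⌉₊, (div_le_iff₀ hp0).1 (Nat.le_ceil _)⟩
  have hN' : 1 / p ≤ N := by rw [div_le_iff₀ hp0]; linarith
  set c : ℕ → ℝ := fun n => (1 / 2) ^ n
  have hc0 (n : ℕ) : 0 ≤ c n := by positivity
  have hcp : Summable fun n => c n ^ p := by
    simp_rw [c, ← Real.rpow_pow_comm (by norm_num : (0 : ℝ) ≤ 1 / 2)]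
    exact summable_geometric_of_lt_one (by positivity)
      (Real.rpow_lt_one (by norm_num) (by norm_num) hp0)
  choose T hT hμT using fun n : ℕ => hC (2 ^ N * (n + 1) / c n) (by positivity)
  have hf := memHp_testSeries hp0 hp1 hN hT hc0 summable_geometric_two hcp
  have hfin : ∫⁻ t in Ico 0 1, ‖testSeries p N c T t‖ₑ ∂μ < ⊤ := by
    have := (h _ hf 0 (mem_ball_self one_pos)).hasFiniteIntegral
    simpa [hasFiniteIntegral_def] using this
  obtain ⟨n, hn⟩ := ENNReal.exists_nat_gt hfin.ne
  have hle := ofReal_le_lintegral_norm_testSeries hT hN' hc0 summable_geometric_two n (hμT n).le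
  have hcn : c n ≠ 0 := by positivity
  rw [show c n * (2 ^ N * (n + 1) / c n) / 2 ^ N = n + 1 by field_simp] at hle
  refine hn.not_ge (le_trans ?_ hle)
  rw [← ENNReal.ofReal_natCast]
  exact ENNReal.ofReal_le_ofReal (by linarith)

/-- if `I_μ(f)` is well defined for every `f ∈ H^p` (`0<p≤1`),
then `μ` is a `1/p`-Carleson measure. -/
theorem carleson_of_Imu_welldefined (p : ℝ) (hp0 : 0 < p) (hp1 : p ≤ 1)
    (μ : Measure ℝ) [IsFiniteMeasure μ] (hsupp : μ ((Set.Ico (0:ℝ) 1)ᶜ) = 0)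
    (h : ∀ f : ℂ → ℂ, MemHp p f → ∀ z ∈ Metric.ball (0:ℂ) 1,
      IntegrableOn (fun t : ℝ => f (t : ℂ) / (1 - (t : ℂ) * z)) (Set.Ico (0:ℝ) 1) μ) :
    IsCarleson (1/p) μ :=
  carleson_of_Imu_welldefined_general p hp0 hp1 μ h
end

section
/- Suppose 0<p<∞ and let μ be a finite positive Borel measure on [0,1) which is a 1-logarithmic (1/p)-Carleson measure. For 0≤b<1 define f_b : [0,1) → ℝ by f_b(t) = ( (1−b²)/(1−bt)² )^{1/p}. Then lim_{b→1⁻} ∫_{[0,1)} f_b(t) dμ(t) = 0. -/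
open MeasureTheory Filter Topology

/-!
Write `s = 1 / p`. A `1`-logarithmic `s`-Carleson measure is a vanishing `s`-Carleson measure:
`μ [t, 1) = o((1 - t) ^ s)` as `t → 1⁻`. If `μ [t, 1) ≤ C (1 - t) ^ s` for `t ∈ [r, 1)`, the
layer-cake formula bounds `∫_{[r,1)} f_b dμ` by `2 ^ (s + 1) C` uniformly in `b`: the superlevel
set `{f_b > λ}` lies in `{1 - t < √((1 - b²) / λ ^ (1 / s))}`, whose measure is
`≤ C (1 - b²) ^ (s / 2) λ ^ (-1/2)`, and `f_b ≤ ((1 + b) / (1 - b)) ^ s`. Choosing `r` with `C`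
small and using that `f_b → 0` uniformly on `[0, r)` gives the limit.
-/

open Set

/-- `f_b = mobiusKernel b ^ (1 / p)`; `mobiusKernel b = |φ_b'|` for the disc automorphism
`φ_b z = (b - z) / (1 - b z)`. -/
noncomputable def mobiusKernel (b t : ℝ) : ℝ := (1 - b ^ 2) / (1 - b * t) ^ 2

def IsVanishingCarleson (s : ℝ) (μ : Measure ℝ) : Prop :=
  ∀ c > 0, ∀ᶠ t in 𝓝[<] 1, μ (Ico t 1) ≤ ENNReal.ofReal (c * (1 - t) ^ s)

section MobiusKernel

variable {b t y s : ℝ}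

lemma mobiusKernel_nonneg (hb : b ^ 2 ≤ 1) : 0 ≤ mobiusKernel b t :=
  div_nonneg (by linarith) (sq_nonneg _)

lemma mobiusKernel_le_of_le (hb : b ^ 2 ≤ 1) (hy : 0 < y) (hyt : y ≤ 1 - b * t) :
    mobiusKernel b t ≤ (1 - b ^ 2) / y ^ 2 :=
  div_le_div_of_nonneg_left (by linarith) (by positivity) (pow_le_pow_left₀ hy.le hyt 2)

lemma one_sub_lt_of_lt_mobiusKernel_rpow {l : ℝ} (hb0 : 0 ≤ b) (hb1 : b < 1) (ht : 0 ≤ t)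
    (hs : 0 < s) (hl : 0 < l) (h : l < mobiusKernel b t ^ s) :
    1 - t < √((1 - b ^ 2) / l ^ s⁻¹) := by
  by_contra! hle
  have hb2 : 0 < 1 - b ^ 2 := by nlinarith
  have hx : 0 < √((1 - b ^ 2) / l ^ s⁻¹) := Real.sqrt_pos.2 (by positivity)
  have hkernel : mobiusKernel b t ≤ l ^ s⁻¹ := by
    calc mobiusKernel b t ≤ (1 - b ^ 2) / √((1 - b ^ 2) / l ^ s⁻¹) ^ 2 :=
          mobiusKernel_le_of_le (by nlinarith) hx (by nlinarith)
      _ = l ^ s⁻¹ := by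
          rw [Real.sq_sqrt (by positivity)]
          field_simp
  have := Real.rpow_le_rpow (mobiusKernel_nonneg (by nlinarith)) hkernel hs.le
  rw [Real.rpow_inv_rpow hl.le hs.ne'] at this
  exact this.not_gt h

lemma one_sub_sq_rpow_mul_rpow_eq (hb0 : 0 ≤ b) (hb1 : b < 1) :
    (1 - b ^ 2) ^ (s / 2) * (((1 - b ^ 2) / (1 - b) ^ 2) ^ s) ^ (1 / 2 : ℝ) = (1 + b) ^ s := by
  have hb2 : 0 ≤ 1 - b ^ 2 := by nlinarith
  have hsq : (1 - b ^ 2) * ((1 - b ^ 2) / (1 - b) ^ 2) = (1 + b) ^ 2 := by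
    field_simp [show (1 - b) ≠ 0 by linarith]
    ring
  rw [← Real.rpow_mul (by positivity), mul_one_div, ← Real.mul_rpow hb2 (by positivity), hsq,
    ← Real.rpow_natCast, ← Real.rpow_mul (by positivity)]
  congr 1
  push_cast
  ring

lemma measurable_mobiusKernel_rpow : Measurable fun t => mobiusKernel b t ^ s := by
  unfold mobiusKernel
  fun_prop

end MobiusKernel

lemma lintegral_Ioc_mul_rpow_neg_half {K M : ℝ} (hK : 0 ≤ K) (hM : 0 ≤ M) :
    ∫⁻ l in Ioc 0 M, ENNReal.ofReal (K * l ^ (-(1 / 2) : ℝ)) =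
      ENNReal.ofReal (2 * K * M ^ (1 / 2 : ℝ)) := by
  have hint : IntervalIntegrable (fun l : ℝ => K * l ^ (-(1 / 2) : ℝ)) volume 0 M :=
    (intervalIntegral.intervalIntegrable_rpow' (by norm_num)).const_mul K
  rw [← ofReal_integral_eq_lintegral_ofReal
      ((intervalIntegrable_iff_integrableOn_Ioc_of_le hM).1 hint)
      ((ae_restrict_iff' measurableSet_Ioc).2 (ae_of_all _ fun l hl =>
        mul_nonneg hK (Real.rpow_nonneg hl.1.le _))),
    ← intervalIntegral.integral_of_le hM, intervalIntegral.integral_const_mul,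
    integral_rpow (by norm_num), show -(1 / 2 : ℝ) + 1 = 1 / 2 by norm_num, Real.zero_rpow (by norm_num)]
  ring_nf

section Carleson

variable {μ : Measure ℝ} {r s C b : ℝ}

lemma measure_Ico_inter_Ioi_le (hs : 0 ≤ s) (hC : 0 ≤ C)
    (hμ : ∀ t ∈ Ico r 1, μ (Ico t 1) ≤ ENNReal.ofReal (C * (1 - t) ^ s)) {x : ℝ} :
    μ (Ico r 1 ∩ Ioi (1 - x)) ≤ ENNReal.ofReal (C * x ^ s) := by
  rcases lt_or_ge (max r (1 - x)) 1 with h | h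
  · calc μ (Ico r 1 ∩ Ioi (1 - x)) ≤ μ (Ico (max r (1 - x)) 1) :=
          measure_mono fun t ht => ⟨max_le ht.1.1 (le_of_lt ht.2), ht.1.2⟩
      _ ≤ ENNReal.ofReal (C * (1 - max r (1 - x)) ^ s) := hμ _ ⟨le_max_left _ _, h⟩
      _ ≤ ENNReal.ofReal (C * x ^ s) := by
          gcongr
          linarith [le_max_right r (1 - x)]
  · have : Ico r 1 ∩ Ioi (1 - x) = ∅ := by
      ext t
      simp only [mem_inter_iff, mem_Ico, mem_Ioi, mem_empty_iff_false, iff_false]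
      rintro ⟨⟨hrt, ht1⟩, hxt⟩
      rcases le_max_iff.1 h with h | h <;> linarith
    simp [this]

lemma measure_superlevel_mobiusKernel_rpow_le (hs : 0 < s) (hC : 0 ≤ C) (hr : 0 ≤ r)
    (hb0 : 0 ≤ b) (hb1 : b < 1)
    (hμ : ∀ t ∈ Ico r 1, μ (Ico t 1) ≤ ENNReal.ofReal (C * (1 - t) ^ s)) {l : ℝ} (hl : 0 < l) :
    μ.restrict (Ico r 1) {t | l < mobiusKernel b t ^ s} ≤
      ENNReal.ofReal (C * (1 - b ^ 2) ^ (s / 2) * l ^ (-(1 / 2) : ℝ)) := by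
  have hb2 : 0 ≤ 1 - b ^ 2 := by nlinarith
  rw [Measure.restrict_apply' measurableSet_Ico]
  calc μ ({t | l < mobiusKernel b t ^ s} ∩ Ico r 1)
      ≤ μ (Ico r 1 ∩ Ioi (1 - √((1 - b ^ 2) / l ^ s⁻¹))) := by
        refine measure_mono fun t ⟨hlt, ht⟩ => ⟨ht, ?_⟩
        have := one_sub_lt_of_lt_mobiusKernel_rpow hb0 hb1 (hr.trans ht.1) hs hl hlt
        simp only [mem_Ioi]
        linarith
    _ ≤ ENNReal.ofReal (C * √((1 - b ^ 2) / l ^ s⁻¹) ^ s) :=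
        measure_Ico_inter_Ioi_le hs.le hC hμ
    _ = ENNReal.ofReal (C * (1 - b ^ 2) ^ (s / 2) * l ^ (-(1 / 2) : ℝ)) := by
        rw [Real.sqrt_eq_rpow, ← Real.rpow_mul (by positivity), Real.div_rpow hb2 (by positivity),
          ← Real.rpow_mul hl.le, Real.rpow_neg hl.le]
        congr 1
        field_simp

lemma setLIntegral_Ico_mobiusKernel_rpow_le (hs : 0 < s) (hC : 0 ≤ C) (hr : 0 ≤ r)
    (hb0 : 0 ≤ b) (hb1 : b < 1)
    (hμ : ∀ t ∈ Ico r 1, μ (Ico t 1) ≤ ENNReal.ofReal (C * (1 - t) ^ s)) :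
    ∫⁻ t in Ico r 1, ENNReal.ofReal (mobiusKernel b t ^ s) ∂μ ≤
      ENNReal.ofReal (2 ^ (s + 1) * C) := by
  have hb2 : 0 ≤ 1 - b ^ 2 := by nlinarith
  set M := ((1 - b ^ 2) / (1 - b) ^ 2) ^ s with hM
  have hle_M : ∀ t ∈ Ico r 1, mobiusKernel b t ^ s ≤ M := fun t ht =>
    Real.rpow_le_rpow (mobiusKernel_nonneg (by nlinarith))
      (mobiusKernel_le_of_le (by nlinarith) (by linarith) (by nlinarith [hr.trans ht.1, ht.2]))
      hs.le
  have hM_bound : 2 * (C * (1 - b ^ 2) ^ (s / 2)) * M ^ (1 / 2 : ℝ) ≤ 2 ^ (s + 1) * C := by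
    calc 2 * (C * (1 - b ^ 2) ^ (s / 2)) * M ^ (1 / 2 : ℝ) = 2 * C * (1 + b) ^ s := by
          rw [← one_sub_sq_rpow_mul_rpow_eq hb0 hb1]; ring
      _ ≤ 2 * C * 2 ^ s := by gcongr; linarith
      _ = 2 ^ (s + 1) * C := by rw [Real.rpow_add_one two_ne_zero]; ring
  rw [lintegral_eq_lintegral_meas_lt _
    (ae_of_all _ fun t => Real.rpow_nonneg (mobiusKernel_nonneg (by nlinarith)) _)
    measurable_mobiusKernel_rpow.aemeasurable]
  calc ∫⁻ l in Ioi 0, μ.restrict (Ico r 1) {t | l < mobiusKernel b t ^ s}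
      ≤ ∫⁻ l in Ioi 0, (Ioc 0 M).indicator
          (fun l => ENNReal.ofReal (C * (1 - b ^ 2) ^ (s / 2) * l ^ (-(1 / 2) : ℝ))) l := by
        refine setLIntegral_mono' measurableSet_Ioi fun l hl => ?_
        by_cases hlM : l ≤ M
        · rw [indicator_of_mem (show l ∈ Ioc 0 M from ⟨hl, hlM⟩)]
          exact measure_superlevel_mobiusKernel_rpow_le hs hC hr hb0 hb1 hμ hl
        · rw [Measure.restrict_apply' measurableSet_Ico,
            measure_mono_null (fun t ht => hlM ((le_of_lt ht.1).trans (hle_M t ht.2)))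
              measure_empty]
          exact zero_le
    _ ≤ ∫⁻ l, (Ioc 0 M).indicator
          (fun l => ENNReal.ofReal (C * (1 - b ^ 2) ^ (s / 2) * l ^ (-(1 / 2) : ℝ))) l :=
        setLIntegral_le_lintegral _ _
    _ = ENNReal.ofReal (2 * (C * (1 - b ^ 2) ^ (s / 2)) * M ^ (1 / 2 : ℝ)) := by
        rw [lintegral_indicator measurableSet_Ioc]
        exact lintegral_Ioc_mul_rpow_neg_half (by positivity) (by positivity)
    _ ≤ ENNReal.ofReal (2 ^ (s + 1) * C) := ENNReal.ofReal_le_ofReal hM_bound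

lemma tendsto_setLIntegral_Ico_zero_mobiusKernel_rpow (hs : 0 < s) (hr : r < 1)
    (hμ : μ (Ico 0 r) ≠ ⊤) :
    Tendsto (fun b => ∫⁻ t in Ico 0 r, ENNReal.ofReal (mobiusKernel b t ^ s) ∂μ)
      (𝓝[<] 1) (𝓝 0) := by
  have hbound : ∀ᶠ b in 𝓝[<] (1 : ℝ),
      ∫⁻ t in Ico 0 r, ENNReal.ofReal (mobiusKernel b t ^ s) ∂μ ≤
        ENNReal.ofReal (((1 - b ^ 2) / (1 - r) ^ 2) ^ s) * μ (Ico 0 r) := by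
    filter_upwards [Ioo_mem_nhdsLT zero_lt_one] with b hb
    calc ∫⁻ t in Ico 0 r, ENNReal.ofReal (mobiusKernel b t ^ s) ∂μ
        ≤ ∫⁻ t in Ico 0 r, ENNReal.ofReal (((1 - b ^ 2) / (1 - r) ^ 2) ^ s) ∂μ :=
          setLIntegral_mono' measurableSet_Ico fun t ht => ENNReal.ofReal_le_ofReal <|
            Real.rpow_le_rpow (mobiusKernel_nonneg (by nlinarith [hb.1, hb.2]))
              (mobiusKernel_le_of_le (by nlinarith [hb.1, hb.2]) (by linarith)
                (by nlinarith [hb.1, hb.2, ht.1, ht.2])) hs.le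
      _ = ENNReal.ofReal (((1 - b ^ 2) / (1 - r) ^ 2) ^ s) * μ (Ico 0 r) :=
          setLIntegral_const _ _
  have hcont : Continuous fun b : ℝ => ENNReal.ofReal (((1 - b ^ 2) / (1 - r) ^ 2) ^ s) :=
    ENNReal.continuous_ofReal.comp ((by fun_prop : Continuous fun b : ℝ =>
      (1 - b ^ 2) / (1 - r) ^ 2).rpow_const fun _ => Or.inr hs.le)
  have hlim : Tendsto
      (fun b : ℝ => ENNReal.ofReal (((1 - b ^ 2) / (1 - r) ^ 2) ^ s) * μ (Ico 0 r))
      (𝓝[<] 1) (𝓝 0) := by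
    have := (ENNReal.Tendsto.mul_const (hcont.tendsto 1) (Or.inr hμ)).mono_left
      (nhdsWithin_le_nhds (s := Iio 1))
    simpa [Real.zero_rpow hs.ne'] using this
  exact tendsto_of_tendsto_of_tendsto_of_le_of_le' tendsto_const_nhds hlim
    (Eventually.of_forall fun _ => zero_le) hbound

lemma IsLogCarleson.isVanishingCarleson [IsFiniteMeasure μ] (h : IsLogCarleson s μ) :
    IsVanishingCarleson s μ := by
  intro c hc
  obtain ⟨C, hC, hμ⟩ := h
  have hgap : Tendsto (fun t : ℝ => 1 - t) (𝓝[<] 1) (𝓝[>] 0) :=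
    tendsto_nhdsWithin_of_tendsto_nhds_of_eventually_within _
      (((continuous_const.sub continuous_id).tendsto' 1 0 (sub_self 1)).mono_left
        nhdsWithin_le_nhds)
      (eventually_nhdsWithin_of_forall fun t (ht : t < 1) => sub_pos.2 ht)
  have hlog : Tendsto (fun t : ℝ => Real.log (2 / (1 - t))) (𝓝[<] 1) atTop := by
    simp_rw [div_eq_mul_inv]
    exact Real.tendsto_log_atTop.comp ((tendsto_inv_nhdsGT_zero.comp hgap).const_mul_atTop two_pos)
  filter_upwards [hlog.eventually_ge_atTop (C / c), Ioo_mem_nhdsLT zero_lt_one] with t hlogt ht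
  have hL : 0 < Real.log (2 / (1 - t)) := (div_pos hC hc).trans_le hlogt
  have hst : 0 < (1 - t) ^ s := Real.rpow_pos_of_pos (by linarith [ht.2]) s
  have hCc : C ≤ c * Real.log (2 / (1 - t)) := by rwa [div_le_iff₀' hc] at hlogt
  rw [← ENNReal.ofReal_toReal (measure_ne_top μ _)]
  refine ENNReal.ofReal_le_ofReal ?_
  calc (μ (Ico t 1)).toReal ≤ C * (1 - t) ^ s / Real.log (2 / (1 - t)) :=
        (le_div_iff₀ hL).2 (hμ t ⟨ht.1.le, ht.2⟩)
    _ ≤ c * (1 - t) ^ s := by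
        rw [div_le_iff₀ hL]
        nlinarith

theorem IsVanishingCarleson.tendsto_setLIntegral_Ico_mobiusKernel_rpow [IsFiniteMeasure μ]
    (hμ : IsVanishingCarleson s μ) (hs : 0 < s) :
    Tendsto (fun b => ∫⁻ t in Ico 0 1, ENNReal.ofReal (mobiusKernel b t ^ s) ∂μ)
      (𝓝[<] 1) (𝓝 0) := by
  rw [ENNReal.tendsto_nhds_zero]
  intro ε hε
  obtain ⟨δ, -, hδ, hδε⟩ := ENNReal.lt_iff_exists_real_btwn.1 hε
  have hδ : 0 < δ := ENNReal.ofReal_pos.1 hδ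
  set c := δ / (2 * 2 ^ (s + 1)) with hc
  obtain ⟨r₀, hr₀, hsub⟩ := mem_nhdsLT_iff_exists_Ico_subset.1 (hμ c (by positivity))
  set r := max r₀ 0
  have hr : r < 1 := max_lt hr₀ zero_lt_one
  have hμr : ∀ t ∈ Ico r 1, μ (Ico t 1) ≤ ENNReal.ofReal (c * (1 - t) ^ s) :=
    fun t ht => hsub ⟨le_of_max_le_left ht.1, ht.2⟩
  filter_upwards [ENNReal.tendsto_nhds_zero.1
      (tendsto_setLIntegral_Ico_zero_mobiusKernel_rpow hs hr (measure_ne_top μ _))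
      (ENNReal.ofReal (δ / 2)) (by positivity), Ioo_mem_nhdsLT zero_lt_one] with b hhead hb
  calc ∫⁻ t in Ico 0 1, ENNReal.ofReal (mobiusKernel b t ^ s) ∂μ
      = (∫⁻ t in Ico 0 r, ENNReal.ofReal (mobiusKernel b t ^ s) ∂μ) +
          ∫⁻ t in Ico r 1, ENNReal.ofReal (mobiusKernel b t ^ s) ∂μ := by
        rw [← lintegral_union measurableSet_Ico Ico_disjoint_Ico_same,
          Ico_union_Ico_eq_Ico (le_max_right _ _) hr.le]
    _ ≤ ENNReal.ofReal (δ / 2) + ENNReal.ofReal (2 ^ (s + 1) * c) :=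
        add_le_add hhead
          (setLIntegral_Ico_mobiusKernel_rpow_le hs (by positivity) (le_max_right _ _)
            hb.1.le hb.2 hμr)
    _ = ENNReal.ofReal δ := by
        rw [← ENNReal.ofReal_add (by positivity) (by positivity), hc]
        congr 1
        field_simp
        ring
    _ ≤ ε := hδε.le

end Carleson

theorem integral_fb_tendsto_zero_general (p : ℝ) (hp : 0 < p)
    (μ : Measure ℝ) [IsFiniteMeasure μ]
    (hcar : IsLogCarleson (1/p) μ) :
    Tendsto (fun b : ℝ =>
        ∫ t in Set.Ico (0:ℝ) 1, ((1 - b^2) / (1 - b*t)^2) ^ (1/p) ∂μ)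
      (𝓝[<] (1:ℝ)) (𝓝 0) := by
  have hF := hcar.isVanishingCarleson.tendsto_setLIntegral_Ico_mobiusKernel_rpow
    (by positivity : 0 < 1 / p)
  refine ((ENNReal.tendsto_toReal ENNReal.zero_ne_top).comp hF).congr' ?_
  filter_upwards [Ioo_mem_nhdsLT zero_lt_one] with b hb
  exact (integral_eq_lintegral_of_nonneg_ae
    (ae_of_all _ fun t => Real.rpow_nonneg (mobiusKernel_nonneg (by nlinarith [hb.1, hb.2])) _)
    measurable_mobiusKernel_rpow.aestronglyMeasurable).symm

/-- if `μ` is a `1`-logarithmic `1/p`-Carleson measure then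
`∫_{[0,1)} f_b dμ → 0` as `b → 1⁻`, where `f_b(t) = ((1-b²)/(1-bt)²)^{1/p}`. -/
theorem integral_fb_tendsto_zero (p : ℝ) (hp : 0 < p)
    (μ : Measure ℝ) [IsFiniteMeasure μ] (hsupp : μ ((Set.Ico (0:ℝ) 1)ᶜ) = 0)
    (hcar : IsLogCarleson (1/p) μ) :
    Tendsto (fun b : ℝ =>
        ∫ t in Set.Ico (0:ℝ) 1, ((1 - b^2) / (1 - b*t)^2) ^ (1/p) ∂μ)
      (𝓝[<] (1:ℝ)) (𝓝 0) :=
  integral_fb_tendsto_zero_general p hp μ hcar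
end
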